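/- Every SO(3)-invariant polynomial p : ℝ³ → ℝ in a single vector variable x is a polynomial in the single generator x·x; i.e., there exists a one-variable real polynomial q with p(x) = q(‖x‖²) for all x ∈ ℝ³. -/
import Mathlib

open Matrix

section Aux

lemma rotZ_props (c s : ℝ) (h : c^2 + s^2 = 1) :
    (!![c,-s,0; s,c,0; 0,0,1] : Matrix (Fin 3) (Fin 3) ℝ) * (!![c,-s,0; s,c,0; 0,0,1])ᵀ = 1 ∧
    (!![c,-s,0; s,c,0; 0,0,1] : Matrix (Fin 3) (Fin 3) ℝ).det = 1 := by
  have ht : (!![c,-s,0; s,c,0; 0,0,1] : Matrix (Fin 3) (Fin 3) ℝ)ᵀ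
      = !![c,s,0; -s,c,0; 0,0,1] := by
    ext i j; fin_cases i <;> fin_cases j <;> simp
  constructor
  · rw [ht]
    ext i j
    fin_cases i <;> fin_cases j <;>
      simp [Matrix.mul_apply, Fin.sum_univ_three, Matrix.one_apply] <;> linarith [h]
  · simp [Matrix.det_fin_three]; linear_combination h

lemma rotZ_mulVec (c s : ℝ) (y : Fin 3 → ℝ) :
    (!![c,-s,0; s,c,0; 0,0,1] : Matrix (Fin 3) (Fin 3) ℝ) *ᵥ y
      = ![c * y 0 - s * y 1, s * y 0 + c * y 1, y 2] := by
  funext i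
  fin_cases i <;> (simp [Matrix.mulVec, dotProduct, Fin.sum_univ_three]; try ring)

lemma rotY_props (c s : ℝ) (h : c^2 + s^2 = 1) :
    (!![c,0,-s; 0,1,0; s,0,c] : Matrix (Fin 3) (Fin 3) ℝ) * (!![c,0,-s; 0,1,0; s,0,c])ᵀ = 1 ∧
    (!![c,0,-s; 0,1,0; s,0,c] : Matrix (Fin 3) (Fin 3) ℝ).det = 1 := by
  have ht : (!![c,0,-s; 0,1,0; s,0,c] : Matrix (Fin 3) (Fin 3) ℝ)ᵀ
      = !![c,0,s; 0,1,0; -s,0,c] := by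
    ext i j; fin_cases i <;> fin_cases j <;> simp
  constructor
  · rw [ht]
    ext i j
    fin_cases i <;> fin_cases j <;>
      simp [Matrix.mul_apply, Fin.sum_univ_three, Matrix.one_apply] <;> linarith [h]
  · simp [Matrix.det_fin_three]; linear_combination h

lemma rotY_mulVec (c s : ℝ) (y : Fin 3 → ℝ) :
    (!![c,0,-s; 0,1,0; s,0,c] : Matrix (Fin 3) (Fin 3) ℝ) *ᵥ y
      = ![c * y 0 - s * y 2, y 1, s * y 0 + c * y 2] := by
  funext i
  fin_cases i <;> (simp [Matrix.mulVec, dotProduct, Fin.sum_univ_three]; try ring)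

lemma sum_range_two_mul (m : ℕ) (g : ℕ → ℝ) :
    ∑ i ∈ Finset.range (2 * m), g i = ∑ k ∈ Finset.range m, (g (2 * k) + g (2 * k + 1)) := by
  induction m with
  | zero => simp
  | succ n ih =>
    have : 2 * (n + 1) = (2 * n + 1) + 1 := by ring
    rw [this, Finset.sum_range_succ, Finset.sum_range_succ, ih, Finset.sum_range_succ]
    ring

lemma coeff_comp_neg_X (f : Polynomial ℝ) (n : ℕ) :
    (f.comp (-Polynomial.X)).coeff n = (-1)^n * f.coeff n := by
  rw [Polynomial.comp_eq_sum_left, Polynomial.sum_def, Polynomial.finset_sum_coeff]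
  have : ∀ e ∈ f.support,
      (Polynomial.C (f.coeff e) * (-Polynomial.X) ^ e).coeff n
        = if e = n then (-1)^n * f.coeff n else 0 := by
    intro e _
    have hneg : (-Polynomial.X : Polynomial ℝ) ^ e
        = Polynomial.C ((-1 : ℝ)^e) * Polynomial.X ^ e := by
      rw [neg_pow, map_pow, map_neg, Polynomial.C_1]
    rw [hneg, ← mul_assoc, ← Polynomial.C_mul, Polynomial.coeff_C_mul, Polynomial.coeff_X_pow]
    by_cases he : e = n
    · simp [he, mul_comm]
    · rw [if_neg (fun h => he h.symm), if_neg he, mul_zero]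
  rw [Finset.sum_congr rfl this, Finset.sum_ite_eq' f.support n]
  by_cases hn : n ∈ f.support
  · simp [hn]
  · simp only [hn, if_false]
    rw [Polynomial.notMem_support_iff.mp hn, mul_zero]

lemma even_poly_exists (f : Polynomial ℝ) (hf : ∀ t : ℝ, f.eval (-t) = f.eval t) :
    ∃ q : Polynomial ℝ, ∀ t : ℝ, f.eval t = q.eval (t^2) := by
  have hcomp : f.comp (-Polynomial.X) = f := by
    apply Polynomial.funext
    intro t
    simp [Polynomial.eval_comp, hf]
  have hodd : ∀ k, f.coeff (2 * k + 1) = 0 := by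
    intro k
    have := coeff_comp_neg_X f (2 * k + 1)
    rw [hcomp] at this
    have h2 : ((-1 : ℝ))^(2 * k + 1) = -1 := by
      rw [pow_succ, pow_mul]; norm_num
    rw [h2] at this
    linarith [this]
  set d := f.natDegree with hd
  refine ⟨∑ k ∈ Finset.range (d + 1), Polynomial.C (f.coeff (2 * k)) * Polynomial.X ^ k, ?_⟩
  intro t
  have h1 : f.eval t = ∑ i ∈ Finset.range (2 * (d + 1)), f.coeff i * t ^ i :=
    Polynomial.eval_eq_sum_range' (by omega) t
  rw [h1, sum_range_two_mul]
  rw [Polynomial.eval_finset_sum]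
  apply Finset.sum_congr rfl
  intro k _
  rw [hodd k]
  simp only [zero_mul, add_zero, Polynomial.eval_mul, Polynomial.eval_C, Polynomial.eval_pow,
    Polynomial.eval_X, pow_mul]

end Aux

/-- Every SO(3)-invariant polynomial in a single vector variable `x ∈ ℝ³` is a
polynomial in the single generator `x·x`. -/
theorem invariant_polynomial_single_vector (p : MvPolynomial (Fin 3) ℝ)
    (hp : ∀ R : Matrix (Fin 3) (Fin 3) ℝ, R * Rᵀ = 1 → R.det = 1 →
      ∀ x : Fin 3 → ℝ, MvPolynomial.eval (R *ᵥ x) p = MvPolynomial.eval x p) :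
    ∃ q : Polynomial ℝ,
      ∀ x : Fin 3 → ℝ, MvPolynomial.eval x p = Polynomial.eval (x ⬝ᵥ x) q := by
  -- the one-variable polynomial t ↦ p (t, 0, 0)
  set f : Polynomial ℝ :=
    MvPolynomial.eval₂ Polynomial.C (fun i => if i = 0 then Polynomial.X else 0) p with hfdef
  have hf : ∀ t : ℝ, f.eval t = MvPolynomial.eval ![t, 0, 0] p := by
    intro t
    have := MvPolynomial.eval₂_comp_left (Polynomial.evalRingHom t) Polynomial.C
      (fun i => if i = 0 then Polynomial.X else 0) p
    simp only [hfdef]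
    rw [show (Polynomial.eval t f) = (Polynomial.evalRingHom t) f from rfl, hfdef, this]
    have hC : (Polynomial.evalRingHom t).comp Polynomial.C = RingHom.id ℝ := by
      ext r; simp
    have harg : (⇑(Polynomial.evalRingHom t) ∘ fun i : Fin 3 =>
        if i = 0 then Polynomial.X else 0) = ![t, 0, 0] := by
      funext i; fin_cases i <;> simp
    rw [hC, harg, MvPolynomial.eval₂_id]
  -- step 1 : rotate around z-axis
  have step1 : ∀ x : Fin 3 → ℝ,
      MvPolynomial.eval x p
        = MvPolynomial.eval ![Real.sqrt (x 0 ^ 2 + x 1 ^ 2), 0, x 2] p := by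
    intro x
    set r := Real.sqrt (x 0 ^ 2 + x 1 ^ 2) with hrdef
    by_cases hr : r = 0
    · have hsum : x 0 ^ 2 + x 1 ^ 2 = 0 := by
        have h0 : (0:ℝ) ≤ x 0 ^ 2 + x 1 ^ 2 := by positivity
        have := Real.sqrt_eq_zero h0 |>.mp hr
        exact this
      have h0 : x 0 = 0 := by nlinarith [sq_nonneg (x 0), sq_nonneg (x 1)]
      have h1 : x 1 = 0 := by nlinarith [sq_nonneg (x 0), sq_nonneg (x 1)]
      have hx : x = ![r, 0, x 2] := by
        funext i; fin_cases i <;> simp [h0, h1, hr]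
      rw [← hx]
    · have hnn : (0:ℝ) ≤ x 0 ^ 2 + x 1 ^ 2 := by positivity
      have hr2 : r ^ 2 = x 0 ^ 2 + x 1 ^ 2 := Real.sq_sqrt hnn
      have hcs : (x 0 / r) ^ 2 + (x 1 / r) ^ 2 = 1 := by
        field_simp
        linarith [hr2]
      obtain ⟨ho, hdet⟩ := rotZ_props (x 0 / r) (x 1 / r) hcs
      have hinv := hp _ ho hdet ![r, 0, x 2]
      rw [rotZ_mulVec] at hinv
      have hvec : ![x 0 / r * (![r, 0, x 2] 0) - x 1 / r * (![r, 0, x 2] 1),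
          x 1 / r * (![r, 0, x 2] 0) + x 0 / r * (![r, 0, x 2] 1), (![r, 0, x 2] 2)] = x := by
        funext i
        fin_cases i <;> simp <;> field_simp
      rw [hvec] at hinv
      exact hinv
  -- step 2 : rotate around y-axis
  have step2 : ∀ a b : ℝ,
      MvPolynomial.eval ![a, 0, b] p
        = MvPolynomial.eval ![Real.sqrt (a ^ 2 + b ^ 2), 0, 0] p := by
    intro a b
    set n := Real.sqrt (a ^ 2 + b ^ 2) with hndef
    by_cases hn : n = 0
    · have hsum : a ^ 2 + b ^ 2 = 0 := by
        have h0 : (0:ℝ) ≤ a ^ 2 + b ^ 2 := by positivity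
        exact Real.sqrt_eq_zero h0 |>.mp hn
      have h0 : a = 0 := by nlinarith [sq_nonneg a, sq_nonneg b]
      have h1 : b = 0 := by nlinarith [sq_nonneg a, sq_nonneg b]
      rw [h0, h1, hn]
    · have hnn : (0:ℝ) ≤ a ^ 2 + b ^ 2 := by positivity
      have hn2 : n ^ 2 = a ^ 2 + b ^ 2 := Real.sq_sqrt hnn
      have hcs : (a / n) ^ 2 + (b / n) ^ 2 = 1 := by
        field_simp
        linarith [hn2]
      obtain ⟨ho, hdet⟩ := rotY_props (a / n) (b / n) hcs
      have hinv := hp _ ho hdet ![n, 0, 0]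
      rw [rotY_mulVec] at hinv
      have hvec : ![a / n * (![n, 0, 0] 0) - b / n * (![n, 0, 0] 2),
          (![n, 0, 0] 1), b / n * (![n, 0, 0] 0) + a / n * (![n, 0, 0] 2)] = ![a, 0, b] := by
        funext i
        fin_cases i <;> simp <;> field_simp
      rw [hvec] at hinv
      exact hinv
  -- the key reduction
  have hdot : ∀ x : Fin 3 → ℝ, x ⬝ᵥ x = x 0 ^ 2 + x 1 ^ 2 + x 2 ^ 2 := by
    intro x
    simp [dotProduct, Fin.sum_univ_three, sq]
  have key : ∀ x : Fin 3 → ℝ,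
      MvPolynomial.eval x p = MvPolynomial.eval ![Real.sqrt (x ⬝ᵥ x), 0, 0] p := by
    intro x
    rw [step1 x, step2]
    congr 3
    rw [hdot]
    rw [Real.sq_sqrt (by positivity : (0:ℝ) ≤ x 0 ^ 2 + x 1 ^ 2)]
  -- f is even
  have heven : ∀ t : ℝ, f.eval (-t) = f.eval t := by
    intro t
    have h1 := key ![t, 0, 0]
    have h2 := key ![(-t), 0, 0]
    rw [hf, hf]
    rw [h1, h2]
    congr 2
    rw [hdot, hdot]
    simp
  obtain ⟨q, hq⟩ := even_poly_exists f heven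
  refine ⟨q, ?_⟩
  intro x
  have hnn : (0:ℝ) ≤ x ⬝ᵥ x := by
    rw [hdot]; positivity
  rw [key x, ← hf, hq, Real.sq_sqrt hnn]
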